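/- arXiv:2311.02325 — 2 statements merged into one kernel-verified Lean document; each statement's English description precedes it below -/
import Mathlib

section
/- Let (X, U) be the product generalized quasi-uniform space of a family {(X_i, U_i) : i ∈ I} with each X_i nonempty. If (X, U) is sequentially Lebesgue, then each (X_i, U_i) is sequentially Lebesgue. -/
open Set

/-- A generalized quasi-uniformity (g-quasi uniformity) on `X`. -/
def IsGQU {X : Type} (U : Set (Set (X × X))) : Prop :=
  U.Nonempty ∧
  (∀ A ∈ U, ∀ x : X, (x, x) ∈ A) ∧
  (∀ A ∈ U, ∀ B : Set (X × X), A ⊆ B → B ∈ U) ∧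
  (∀ A ∈ U, ∃ V ∈ U, SetRel.comp V V ⊆ A)

/-- `B` is a base for the g-quasi uniformity `U`. -/
def IsGQUBaseOf {X : Type} (U B : Set (Set (X × X))) : Prop :=
  B.Nonempty ∧ B ⊆ U ∧ ∀ A ∈ U, ∃ b ∈ B, b ⊆ A

/-- The collection of all supersets of members of `B`. -/
def genGQU {X : Type} (B : Set (Set (X × X))) : Set (Set (X × X)) :=
  {A | ∃ b ∈ B, b ⊆ A}

/-- The generalized topology (supratopology) induced by a g-quasi uniformity. -/
def muU {X : Type} (U : Set (Set (X × X))) : Set (Set X) :=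
  {G | ∀ x ∈ G, ∃ A ∈ U, {y | (x, y) ∈ A} ⊆ G}

/-- A strong generalized topology (supratopology). -/
def IsSupra {X : Type} (μ : Set (Set X)) : Prop :=
  ∅ ∈ μ ∧ Set.univ ∈ μ ∧ ∀ S ⊆ μ, ⋃₀ S ∈ μ

/-- g-quasi uniform continuity. -/
def GQUCont {X Y : Type} (U : Set (Set (X × X))) (V : Set (Set (Y × Y)))
    (f : X → Y) : Prop :=
  ∀ A ∈ V, Prod.map f f ⁻¹' A ∈ U

/-- The Pervin-type base associated to a supratopology. -/
def pervinBase {X : Type} (μ : Set (Set X)) : Set (Set (X × X)) :=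
  (fun G => G ×ˢ G ∪ Gᶜ ×ˢ (Set.univ : Set X)) '' μ

/-- A Cauchy net. -/
def CauchyNet {X D : Type} [Preorder D] (U : Set (Set (X × X))) (S : D → X) : Prop :=
  ∀ A ∈ U, ∃ m : D, ∀ p q : D, m ≤ p → m ≤ q → (S p, S q) ∈ A

/-- A pseudo-Cauchy net. -/
def PseudoCauchyNet {X D : Type} [Preorder D] (U : Set (Set (X × X))) (S : D → X) : Prop :=
  ∀ A ∈ U, ∀ p : D, ∃ m n : D, p ≤ m ∧ p ≤ n ∧ m ≠ n ∧ (S m, S n) ∈ A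

/-- A net has pairwise distinct terms. -/
def DistinctTerms {X D : Type} (S : D → X) : Prop :=
  ∀ m n : D, m ≠ n → S m ≠ S n

/-- `c` is a cluster point of the net `S` w.r.t. the induced supratopology. -/
def ClusterPtNet {X D : Type} [Preorder D] (U : Set (Set (X × X))) (S : D → X) (c : X) : Prop :=
  ∀ G ∈ muU U, c ∈ G → ∀ n : D, ∃ m : D, n ≤ m ∧ S m ∈ G

/-- The net `S` converges to `c` w.r.t. the induced supratopology. -/
def ConvNet {X D : Type} [Preorder D] (U : Set (Set (X × X))) (S : D → X) (c : X) : Prop :=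
  ∀ G ∈ muU U, c ∈ G → ∃ m : D, ∀ n : D, m ≤ n → S n ∈ G

/-- A G-Cauchy sequence. -/
def GCauchySeq {X : Type} (U : Set (Set (X × X))) (x : ℕ → X) : Prop :=
  ∀ A ∈ U, ∃ k : ℕ, ∀ n ≥ k, (x n, x (n + 1)) ∈ A

/-- Completeness: every Cauchy net converges. -/
def CompleteGQU {X : Type} (U : Set (Set (X × X))) : Prop :=
  ∀ (D : Type) [Preorder D] [IsDirected D (· ≤ ·)] [Nonempty D],
    ∀ S : D → X, CauchyNet U S → ∃ c : X, ConvNet U S c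

/-- Strongly Lebesgue: every pseudo-Cauchy net has a cluster point. -/
def StronglyLebesgueGQU {X : Type} (U : Set (Set (X × X))) : Prop :=
  ∀ (D : Type) [Preorder D] [IsDirected D (· ≤ ·)] [Nonempty D],
    ∀ S : D → X, PseudoCauchyNet U S → ∃ c : X, ClusterPtNet U S c

/-- Lebesgue: every pseudo-Cauchy net with pairwise distinct terms has a cluster point. -/
def LebesgueGQU {X : Type} (U : Set (Set (X × X))) : Prop :=
  ∀ (D : Type) [Preorder D] [IsDirected D (· ≤ ·)] [Nonempty D],
    ∀ S : D → X, PseudoCauchyNet U S → DistinctTerms S → ∃ c : X, ClusterPtNet U S c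

/-- Sequentially Lebesgue. -/
def SeqLebesgueGQU {X : Type} (U : Set (Set (X × X))) : Prop :=
  ∀ x : ℕ → X, PseudoCauchyNet U x → DistinctTerms x → ∃ c : X, ClusterPtNet U x c

/-- G-complete: every G-Cauchy sequence converges. -/
def GCompleteGQU {X : Type} (U : Set (Set (X × X))) : Prop :=
  ∀ x : ℕ → X, GCauchySeq U x → ∃ c : X, ConvNet U x c

/-- Weak G-complete: every G-Cauchy sequence has a cluster point. -/
def WeakGCompleteGQU {X : Type} (U : Set (Set (X × X))) : Prop :=
  ∀ x : ℕ → X, GCauchySeq U x → ∃ c : X, ClusterPtNet U x c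

/-- Compactness of the induced supratopology. -/
def CompactGQU {X : Type} (U : Set (Set (X × X))) : Prop :=
  ∀ C ⊆ muU U, ⋃₀ C = Set.univ →
    ∃ F ⊆ C, F.Finite ∧ ⋃₀ F = Set.univ

/-- The standard base of the product g-quasi uniformity. -/
def piBase {I : Type} {X : I → Type} (U : ∀ i, Set (Set (X i × X i))) :
    Set (Set ((∀ i, X i) × (∀ i, X i))) :=
  {S | ∃ i : I, ∃ A ∈ U i,
    S = Prod.map (fun x : ∀ j, X j => x i) (fun x : ∀ j, X j => x i) ⁻¹' A}

/-- The product g-quasi uniformity. -/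
def piGQU {I : Type} {X : I → Type} (U : ∀ i, Set (Set (X i × X i))) :
    Set (Set ((∀ i, X i) × (∀ i, X i))) :=
  genGQU (piBase U)

/-!
Fix a point `b` of the product and embed `X i` as the slice `x ↦ update b i x`. A pseudo-Cauchy
sequence with distinct terms in `X i` stays one in the product, because the other coordinates are
constant and entourages are reflexive; a cluster point of the image projects to a cluster point of
the original sequence, since the projection is g-quasi uniformly continuous.
-/

section

variable {X Y D : Type}

theorem DistinctTerms.comp {f : X → Y} {S : D → X} (hS : DistinctTerms S)
    (hf : Function.Injective f) : DistinctTerms (f ∘ S) :=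
  fun m n hmn => hf.ne (hS m n hmn)

theorem pseudoCauchyNet_const [Preorder D] [NoMaxOrder D] {U : Set (Set (X × X))}
    (hU : ∀ A ∈ U, ∀ x : X, (x, x) ∈ A) (c : X) : PseudoCauchyNet U (fun _ : D => c) := by
  intro A hA p
  obtain ⟨q, hpq⟩ := exists_gt p
  exact ⟨p, q, le_rfl, hpq.le, hpq.ne, hU A hA c⟩

theorem GQUCont.preimage_mem_muU {U : Set (Set (X × X))} {V : Set (Set (Y × Y))} {f : X → Y}
    (hf : GQUCont U V f) {G : Set Y} (hG : G ∈ muU V) : f ⁻¹' G ∈ muU U := by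
  intro x hx
  obtain ⟨A, hA, hAG⟩ := hG (f x) hx
  exact ⟨_, hf A hA, fun y hy => hAG hy⟩

theorem GQUCont.clusterPtNet [Preorder D] {U : Set (Set (X × X))} {V : Set (Set (Y × Y))}
    {f : X → Y} (hf : GQUCont U V f) {S : D → X} {c : X} (hc : ClusterPtNet U S c) :
    ClusterPtNet V (f ∘ S) (f c) :=
  fun _ hG hcG n => hc _ (hf.preimage_mem_muU hG) hcG n

end

section

variable {I D : Type} {X : I → Type} [Preorder D] (U : ∀ i, Set (Set (X i × X i)))

theorem gquCont_eval (i : I) : GQUCont (piGQU U) (U i) (fun x : ∀ j, X j => x i) :=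
  fun A hA => ⟨_, ⟨i, A, hA, rfl⟩, subset_rfl⟩

theorem pseudoCauchyNet_piGQU_iff {S : D → ∀ i, X i} :
    PseudoCauchyNet (piGQU U) S ↔ ∀ i, PseudoCauchyNet (U i) (fun d => S d i) := by
  constructor
  · intro hS i A hA p
    exact hS _ (gquCont_eval U i A hA) p
  · rintro hS A ⟨_, ⟨i, B, hB, rfl⟩, hBA⟩ p
    obtain ⟨m, n, hpm, hpn, hmn, hSmn⟩ := hS i B hB p
    exact ⟨m, n, hpm, hpn, hmn, hBA hSmn⟩

theorem pseudoCauchyNet_update [NoMaxOrder D] [DecidableEq I]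
    (hU : ∀ i, ∀ A ∈ U i, ∀ x, (x, x) ∈ A) (b : ∀ i, X i) (i : I) {x : D → X i}
    (hx : PseudoCauchyNet (U i) x) :
    PseudoCauchyNet (piGQU U) (fun d => Function.update b i (x d)) := by
  rw [pseudoCauchyNet_piGQU_iff]
  intro j
  by_cases hji : j = i
  · subst hji
    simpa using hx
  · simpa [Function.update_of_ne hji] using pseudoCauchyNet_const (hU j) (b j)

end

theorem stmt_17 {I : Type} {X : I → Type} [∀ i, Nonempty (X i)]
    (U : ∀ i, Set (Set (X i × X i))) (hU : ∀ i, IsGQU (U i))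
    (h : SeqLebesgueGQU (piGQU U)) : ∀ i : I, SeqLebesgueGQU (U i) := by
  classical
  intro i x hx hdist
  obtain ⟨b⟩ : Nonempty (∀ j, X j) := inferInstance
  obtain ⟨c, hc⟩ := h (fun n => Function.update b i (x n))
    (pseudoCauchyNet_update U (fun j => (hU j).2.1) b i hx)
    (hdist.comp (Function.update_injective b i))
  exact ⟨c i, by simpa [Function.comp_def] using (gquCont_eval U i).clusterPtNet hc⟩
end

section
/- Let (X, U) be the product generalized quasi-uniform space of a family {(X_i, U_i) : i ∈ I} with each X_i nonempty. Then (X, U) is weak G-complete if and only if each (X_i, U_i) is weak G-complete. -/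
open Set

/-!
A point is a `muU`-cluster point of a net iff the net is frequently in each entourage ball
around it (the balls themselves need not be `muU`-open, but their `muU`-interiors contain the
centre). The product base consists of single-coordinate cylinders, so clustering in the product
is coordinatewise: a product sequence clusters iff each coordinate does, and a factor sequence is
embedded into the product by fixing the other coordinates.
-/

def muInterior {X : Type} (U : Set (Set (X × X))) (s : Set X) : Set X :=
  {y | ∃ W ∈ U, {z | (y, z) ∈ W} ⊆ s}

section Entourages

variable {X : Type} {U : Set (Set (X × X))}

lemma muInterior_subset (hrefl : ∀ A ∈ U, ∀ x : X, (x, x) ∈ A) (s : Set X) :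
    muInterior U s ⊆ s :=
  fun y ⟨W, hW, hWs⟩ => hWs (hrefl W hW y)

lemma muInterior_mem_muU (hcomp : ∀ A ∈ U, ∃ V ∈ U, SetRel.comp V V ⊆ A) (s : Set X) :
    muInterior U s ∈ muU U := by
  rintro y ⟨W, hW, hWs⟩
  obtain ⟨V, hV, hVW⟩ := hcomp W hW
  exact ⟨V, hV, fun z hz => ⟨V, hV, fun t ht => hWs (hVW ⟨z, hz, ht⟩)⟩⟩

lemma mem_muInterior_ball {A : Set (X × X)} (hA : A ∈ U) (c : X) :
    c ∈ muInterior U {y | (c, y) ∈ A} :=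
  ⟨A, hA, subset_rfl⟩

lemma clusterPtNet_iff_frequently_mem_ball (hrefl : ∀ A ∈ U, ∀ x : X, (x, x) ∈ A)
    (hcomp : ∀ A ∈ U, ∃ V ∈ U, SetRel.comp V V ⊆ A)
    {D : Type} [Preorder D] {S : D → X} {c : X} :
    ClusterPtNet U S c ↔ ∀ A ∈ U, ∀ n : D, ∃ m : D, n ≤ m ∧ (c, S m) ∈ A := by
  constructor
  · intro h A hA n
    obtain ⟨m, hnm, hm⟩ :=
      h _ (muInterior_mem_muU hcomp _) (mem_muInterior_ball hA c) n
    exact ⟨m, hnm, muInterior_subset hrefl _ hm⟩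
  · intro h G hG hcG n
    obtain ⟨A, hA, hAG⟩ := hG c hcG
    obtain ⟨m, hnm, hm⟩ := h A hA n
    exact ⟨m, hnm, hAG hm⟩

end Entourages

section Product

variable {I : Type} {X : I → Type} {U : ∀ i, Set (Set (X i × X i))}

lemma preimage_eval_mem_piGQU {i : I} {A : Set (X i × X i)} (hA : A ∈ U i) :
    Prod.map (fun x : ∀ j, X j => x i) (fun x : ∀ j, X j => x i) ⁻¹' A ∈ piGQU U :=
  ⟨_, ⟨i, A, hA, rfl⟩, subset_rfl⟩

lemma piGQU_refl (hrefl : ∀ i, ∀ A ∈ U i, ∀ x : X i, (x, x) ∈ A) :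
    ∀ A ∈ piGQU U, ∀ x : ∀ i, X i, (x, x) ∈ A := by
  rintro A ⟨_, ⟨i, Ai, hAi, rfl⟩, hA⟩ x
  exact hA (hrefl i Ai hAi (x i))

lemma piGQU_comp (hcomp : ∀ i, ∀ A ∈ U i, ∃ V ∈ U i, SetRel.comp V V ⊆ A) :
    ∀ A ∈ piGQU U, ∃ V ∈ piGQU U, SetRel.comp V V ⊆ A := by
  rintro A ⟨_, ⟨i, Ai, hAi, rfl⟩, hA⟩
  obtain ⟨V, hV, hVAi⟩ := hcomp i Ai hAi
  refine ⟨_, preimage_eval_mem_piGQU hV, ?_⟩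
  rintro ⟨x, z⟩ ⟨y, hxy, hyz⟩
  exact hA (hVAi ⟨y i, hxy, hyz⟩)

lemma GCauchySeq.eval {x : ℕ → ∀ i, X i} (hx : GCauchySeq (piGQU U) x) (i : I) :
    GCauchySeq (U i) (fun n => x n i) :=
  fun _ hA => hx _ (preimage_eval_mem_piGQU hA)

lemma GCauchySeq.update [DecidableEq I] (hrefl : ∀ i, ∀ A ∈ U i, ∀ x : X i, (x, x) ∈ A)
    (p : ∀ i, X i) {i : I} {y : ℕ → X i} (hy : GCauchySeq (U i) y) :
    GCauchySeq (piGQU U) (fun n => Function.update p i (y n)) := by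
  rintro A ⟨_, ⟨j, Aj, hAj, rfl⟩, hA⟩
  by_cases hji : j = i
  · subst hji
    obtain ⟨k, hk⟩ := hy Aj hAj
    refine ⟨k, fun n hn => hA ?_⟩
    simpa using hk n hn
  · refine ⟨0, fun n _ => hA ?_⟩
    simpa [Function.update_of_ne hji] using hrefl j Aj hAj (p j)

lemma clusterPtNet_piGQU_iff (hrefl : ∀ i, ∀ A ∈ U i, ∀ x : X i, (x, x) ∈ A)
    (hcomp : ∀ i, ∀ A ∈ U i, ∃ V ∈ U i, SetRel.comp V V ⊆ A)
    {D : Type} [Preorder D] {S : D → ∀ i, X i} {c : ∀ i, X i} :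
    ClusterPtNet (piGQU U) S c ↔ ∀ i, ClusterPtNet (U i) (fun d => S d i) (c i) := by
  simp only [clusterPtNet_iff_frequently_mem_ball (piGQU_refl hrefl) (piGQU_comp hcomp),
    clusterPtNet_iff_frequently_mem_ball (hrefl _) (hcomp _)]
  constructor
  · intro h i A hA n
    exact h _ (preimage_eval_mem_piGQU hA) n
  · rintro h A ⟨_, ⟨i, Ai, hAi, rfl⟩, hA⟩ n
    obtain ⟨m, hnm, hm⟩ := h i Ai hAi n
    exact ⟨m, hnm, hA hm⟩

end Product

theorem stmt_18 {I : Type} {X : I → Type} [∀ i, Nonempty (X i)]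
    (U : ∀ i, Set (Set (X i × X i))) (hU : ∀ i, IsGQU (U i)) :
    WeakGCompleteGQU (piGQU U) ↔ ∀ i : I, WeakGCompleteGQU (U i) := by
  classical
  have hrefl := fun i => (hU i).2.1
  have hcomp := fun i => (hU i).2.2.2
  constructor
  · intro h i y hy
    let p : ∀ j, X j := fun j => Classical.arbitrary (X j)
    obtain ⟨c, hc⟩ := h _ (hy.update hrefl p)
    refine ⟨c i, ?_⟩
    simpa using (clusterPtNet_piGQU_iff hrefl hcomp).mp hc i
  · intro h x hx
    choose c hc using fun i => h i _ (hx.eval i)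
    exact ⟨c, (clusterPtNet_piGQU_iff hrefl hcomp).mpr hc⟩
end
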